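/- arXiv:2604.02475 — 5 statements merged into one kernel-verified Lean document; each statement's English description precedes it below -/
import Mathlib

section
/- For every integer k ≥ 1, A(k) = F_k − 4 Σ_{s=2}^{k} H_{s-1}/s³, where A(k) = Σ_{1≤m,n≤k, m+n≥k+1} 1/(m²n²), F_k = Σ_{m=1}^{k} 1/m⁴, and H_n is the n-th harmonic number. -/
noncomputable def A (k : ℕ) : ℝ :=
  ∑ p ∈ (((Finset.Icc 1 k) ×ˢ (Finset.Icc 1 k)).filter
      (fun p => k + 1 ≤ p.1 + p.2)),
    1 / ((p.1 : ℝ) ^ 2 * (p.2 : ℝ) ^ 2)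

noncomputable def F (n : ℕ) : ℝ := ∑ m ∈ Finset.Icc 1 n, 1 / (m : ℝ) ^ 4

noncomputable def H (n : ℕ) : ℝ := ∑ m ∈ Finset.Icc 1 n, 1 / (m : ℝ)

/-!
Induction on `k`, starting from `A 0 = 0`. Passing from `k` to `k + 1` removes the antidiagonal
`m + n = k + 1` from the summation region and adds the new row and column. On the antidiagonal,
partial fractions give `1/(m²n²) = (1/m² + 1/n²)/(k+1)² + 2(1/m + 1/n)/(k+1)³`, so it contributes
`2Gₖ/(k+1)² + 4Hₖ/(k+1)³` with `Gₖ = ∑_{m ≤ k} 1/m²`, while the row and column contribute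
`2Gₖ/(k+1)² + 1/(k+1)⁴`. Hence `A (k+1) - A k = 1/(k+1)⁴ - 4Hₖ/(k+1)³`.
-/

open Finset

def upperTriangle (k : ℕ) : Finset (ℕ × ℕ) :=
  (Icc 1 k ×ˢ Icc 1 k).filter (fun p => k + 1 ≤ p.1 + p.2)

section Sums

variable {M : Type*} [AddCommGroup M]

theorem sum_Icc_add_one_add_one (g : ℕ → M) {a b : ℕ} (hab : a ≤ b) :
    ∑ n ∈ Icc (a + 1) (b + 1), g n = ∑ n ∈ Icc a b, g n - g a + g (b + 1) := by
  rw [sum_Icc_succ_top (by omega), ← add_sum_Ioc_eq_sum_Icc hab, Icc_add_one_left_eq_Ioc]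
  abel

theorem sum_upperTriangle (f : ℕ → ℕ → M) (k : ℕ) :
    ∑ p ∈ upperTriangle k, f p.1 p.2 = ∑ m ∈ Icc 1 k, ∑ n ∈ Icc (k + 1 - m) k, f m n := by
  rw [upperTriangle, sum_filter, sum_product]
  refine sum_congr rfl fun m hm => ?_
  rw [← sum_filter]
  congr 1
  ext n
  simp only [mem_filter, mem_Icc] at hm ⊢
  omega

theorem sum_upperTriangle_succ (f : ℕ → ℕ → M) (k : ℕ) :
    ∑ p ∈ upperTriangle (k + 1), f p.1 p.2
      = ∑ p ∈ upperTriangle k, f p.1 p.2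
        - ∑ m ∈ Icc 1 k, f m (k + 1 - m) + ∑ m ∈ Icc 1 k, f m (k + 1)
        + ∑ n ∈ Icc 1 (k + 1), f (k + 1) n := by
  have rows : ∀ m ∈ Icc 1 k, ∑ n ∈ Icc (k + 1 + 1 - m) (k + 1), f m n
      = ∑ n ∈ Icc (k + 1 - m) k, f m n - f m (k + 1 - m) + f m (k + 1) := by
    intro m hm
    rw [mem_Icc] at hm
    rw [show k + 1 + 1 - m = k + 1 - m + 1 by omega, sum_Icc_add_one_add_one _ (by omega)]
  rw [sum_upperTriangle, sum_upperTriangle, sum_Icc_succ_top (by omega),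
    sum_congr rfl rows, sum_add_distrib, sum_sub_distrib, Nat.add_sub_cancel_left]

end Sums

theorem sum_Icc_one_reflect {M : Type*} [AddCommMonoid M] (g : ℕ → M) (k : ℕ) :
    ∑ m ∈ Icc 1 k, g (k + 1 - m) = ∑ m ∈ Icc 1 k, g m := by
  refine sum_nbij' (fun m => k + 1 - m) (fun m => k + 1 - m) ?_ ?_ ?_ ?_ ?_ <;>
    intro m hm <;> simp only [mem_Icc] at * <;> omega

theorem one_div_sq_mul_sq_partial_fractions {K : Type*} [Field K] {a b : K} (ha : a ≠ 0)
    (hb : b ≠ 0) (hab : a + b ≠ 0) :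
    1 / (a ^ 2 * b ^ 2) = 1 / (a + b) ^ 2 * (1 / a ^ 2 + 1 / b ^ 2)
      + 2 / (a + b) ^ 3 * (1 / a + 1 / b) := by
  field_simp
  ring

theorem sum_one_div_sq_mul_sq_antidiagonal (k : ℕ) :
    ∑ m ∈ Icc 1 k, 1 / ((m : ℝ) ^ 2 * ((k + 1 - m : ℕ) : ℝ) ^ 2)
      = 2 / ((k : ℝ) + 1) ^ 2 * ∑ m ∈ Icc 1 k, 1 / (m : ℝ) ^ 2
        + 4 / ((k : ℝ) + 1) ^ 3 * H k := by
  have termwise : ∀ m ∈ Icc 1 k, 1 / ((m : ℝ) ^ 2 * ((k + 1 - m : ℕ) : ℝ) ^ 2)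
      = 1 / ((k : ℝ) + 1) ^ 2 * (1 / (m : ℝ) ^ 2 + 1 / ((k + 1 - m : ℕ) : ℝ) ^ 2)
        + 2 / ((k : ℝ) + 1) ^ 3 * (1 / (m : ℝ) + 1 / ((k + 1 - m : ℕ) : ℝ)) := by
    intro m hm
    rw [mem_Icc] at hm
    have hsum : (m : ℝ) + ((k + 1 - m : ℕ) : ℝ) = (k : ℝ) + 1 := by
      rw [Nat.cast_sub (by omega)]; push_cast; ring
    rw [one_div_sq_mul_sq_partial_fractions (by norm_cast; omega) (by norm_cast; omega)
      (by rw [hsum]; positivity), hsum]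
  rw [sum_congr rfl termwise, sum_add_distrib, ← mul_sum, ← mul_sum, sum_add_distrib,
    sum_add_distrib, sum_Icc_one_reflect (fun m => 1 / (m : ℝ) ^ 2),
    sum_Icc_one_reflect (fun m => 1 / (m : ℝ)), H]
  ring

theorem A_succ (k : ℕ) :
    A (k + 1) = A k + 1 / ((k : ℝ) + 1) ^ 4 - 4 * H k / ((k : ℝ) + 1) ^ 3 := by
  rw [A, A, ← upperTriangle, ← upperTriangle,
    sum_upperTriangle_succ (fun m n => 1 / ((m : ℝ) ^ 2 * (n : ℝ) ^ 2)),
    sum_one_div_sq_mul_sq_antidiagonal, sum_Icc_succ_top (by omega)]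
  simp only [one_div, mul_inv, ← sum_mul, ← mul_sum]
  push_cast
  -- `ring` treats inverses of sums as atoms, so it would not see `((k+1)²)⁻¹ ^ 2 = ((k+1)⁴)⁻¹`.
  generalize (k : ℝ) + 1 = x
  ring

theorem A_eq_F_sub_harmonic_sum_general (k : ℕ) :
    A k = F k - 4 * ∑ s ∈ Finset.Icc 2 k, H (s - 1) / (s : ℝ) ^ 3 := by
  have sum_Icc_two_eq_sum_Icc_one : ∀ k, ∑ s ∈ Icc 2 k, H (s - 1) / (s : ℝ) ^ 3
      = ∑ s ∈ Icc 1 k, H (s - 1) / (s : ℝ) ^ 3 :=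
    fun k => sum_subset (Icc_subset_Icc_left one_le_two) fun s hs hs' => by
      obtain rfl : s = 1 := by simp only [mem_Icc] at hs hs'; omega
      simp [H]
  induction k with
  | zero => simp [A, F]
  | succ k ih =>
    rw [A_succ, ih, sum_Icc_two_eq_sum_Icc_one, sum_Icc_two_eq_sum_Icc_one, F, F,
      sum_Icc_succ_top (by omega), sum_Icc_succ_top (by omega)]
    push_cast
    ring

theorem A_eq_F_sub_harmonic_sum (k : ℕ) (hk : 1 ≤ k) :
    A k = F k - 4 * ∑ s ∈ Finset.Icc 2 k, H (s - 1) / (s : ℝ) ^ 3 :=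
  A_eq_F_sub_harmonic_sum_general k
end

section
/- The infinite sum 4 Σ_{s=2}^{∞} H_{s-1}/s³ converges and equals ζ(4), where H_n is the n-th harmonic number. -/
open Finset

lemma H_eq_sum_range (n : ℕ) : H n = ∑ k ∈ range n, 1 / ((k : ℝ) + 1) := by
  rw [H, ← Ico_add_one_right_eq_Icc, sum_Ico_eq_sum_range]
  simp [add_comm]

lemma one_div_sq_mul_sq_eq {K : Type*} [Field K] {x y : K} (hx : x ≠ 0) (hy : y ≠ 0)
    (hxy : x + y ≠ 0) :
    1 / (x ^ 2 * y ^ 2) = 1 / (x ^ 2 * (x + y) ^ 2) + 1 / (y ^ 2 * (x + y) ^ 2)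
      + 2 / (x * (x + y) ^ 3) + 2 / (y * (x + y) ^ 3) := by
  field_simp
  ring

def Nat.prodEquivTrianglesDiag : (ℕ × ℕ) ⊕ ((ℕ × ℕ) ⊕ ℕ) ≃ ℕ × ℕ where
  toFun
    | .inl (m, k) => (m, m + k + 1)
    | .inr (.inl (n, k)) => (n + k + 1, n)
    | .inr (.inr n) => (n, n)
  invFun p :=
    if p.1 < p.2 then .inl (p.1, p.2 - p.1 - 1)
    else if p.2 < p.1 then .inr (.inl (p.2, p.1 - p.2 - 1))
    else .inr (.inr p.1)
  left_inv := by
    rintro (⟨m, k⟩ | ⟨n, k⟩ | n) <;> dsimp only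
    · rw [if_pos (by omega), show m + k + 1 - m - 1 = k by omega]
    · rw [if_neg (by omega), if_pos (by omega), show n + k + 1 - n - 1 = k by omega]
    · rw [if_neg (lt_irrefl n), if_neg (lt_irrefl n)]
  right_inv := by
    rintro ⟨a, b⟩
    rcases lt_trichotomy a b with hab | rfl | hab <;> dsimp only
    · rw [if_pos hab]
      exact Prod.ext rfl (show a + (b - a - 1) + 1 = b by omega)
    · rw [if_neg (lt_irrefl a), if_neg (lt_irrefl a)]
    · rw [if_neg hab.not_gt, if_pos hab]
      exact Prod.ext (show b + (a - b - 1) + 1 = a by omega) rfl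

theorem HasSum.of_triangles_diag {α : Type*} [AddCommMonoid α] [TopologicalSpace α]
    [ContinuousAdd α] {f : ℕ × ℕ → α} {a b c : α}
    (hupper : HasSum (fun q : ℕ × ℕ => f (q.1, q.1 + q.2 + 1)) a)
    (hlower : HasSum (fun q : ℕ × ℕ => f (q.1 + q.2 + 1, q.1)) b)
    (hdiag : HasSum (fun n => f (n, n)) c) : HasSum f (a + (b + c)) :=
  Nat.prodEquivTrianglesDiag.hasSum_iff.mp (hupper.sum (hlower.sum hdiag))

-- The three kinds of terms above, at `x = p.1 + 1`, `y = p.2 + 1`.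
noncomputable def zetaTwoSqTerm (p : ℕ × ℕ) : ℝ :=
  1 / (((p.1 : ℝ) + 1) ^ 2 * ((p.2 : ℝ) + 1) ^ 2)

noncomputable def triangleTerm (p : ℕ × ℕ) : ℝ :=
  1 / (((p.1 : ℝ) + 1) ^ 2 * ((p.1 : ℝ) + p.2 + 2) ^ 2)

noncomputable def eulerTerm (p : ℕ × ℕ) : ℝ :=
  1 / (((p.1 : ℝ) + 1) * ((p.1 : ℝ) + p.2 + 2) ^ 3)

lemma hasSum_one_div_add_one_pow {k : ℕ} {a : ℝ} (h : HasSum (fun n : ℕ => 1 / (n : ℝ) ^ k) a)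
    (hk : k ≠ 0) : HasSum (fun n : ℕ => 1 / ((n : ℝ) + 1) ^ k) a := by
  simpa [hk] using (hasSum_nat_add_iff' 1).mpr h

lemma summable_zetaTwoSqTerm : Summable zetaTwoSqTerm := by
  have hζ2 := (hasSum_one_div_add_one_pow hasSum_zeta_two two_ne_zero).summable
  convert hζ2.mul_of_nonneg hζ2 (fun _ => by positivity) (fun _ => by positivity) using 2 with p
  rw [zetaTwoSqTerm, one_div_mul_one_div]

lemma summable_triangleTerm : Summable triangleTerm := by
  refine summable_zetaTwoSqTerm.of_nonneg_of_le (fun _ => by rw [triangleTerm]; positivity)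
    fun p => one_div_le_one_div_of_le (by positivity) ?_
  have hle : (p.2 : ℝ) + 1 ≤ p.1 + p.2 + 2 := by linarith [(p.1.cast_nonneg : (0 : ℝ) ≤ p.1)]
  exact mul_le_mul_of_nonneg_left (pow_le_pow_left₀ (by positivity) hle 2) (by positivity)

lemma summable_eulerTerm : Summable eulerTerm := by
  refine summable_triangleTerm.of_nonneg_of_le (fun _ => by rw [eulerTerm]; positivity)
    fun p => one_div_le_one_div_of_le (by positivity) ?_
  have hle : (p.1 : ℝ) + 1 ≤ p.1 + p.2 + 2 := by linarith [(p.2.cast_nonneg : (0 : ℝ) ≤ p.2)]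
  linear_combination (mul_le_mul_of_nonneg_left hle
    (by positivity : (0 : ℝ) ≤ (p.1 + 1) * (p.1 + p.2 + 2) ^ 2))

lemma zetaTwoSqTerm_eq (p : ℕ × ℕ) : zetaTwoSqTerm p =
    triangleTerm p + triangleTerm p.swap + 2 * eulerTerm p + 2 * eulerTerm p.swap := by
  rw [zetaTwoSqTerm, one_div_sq_mul_sq_eq (by positivity) (by positivity) (by positivity)]
  simp only [triangleTerm, eulerTerm, Prod.fst_swap, Prod.snd_swap]
  ring_nf

lemma hasSum_zetaTwoSqTerm_triangles_diag :
    HasSum zetaTwoSqTerm (∑' p, triangleTerm p + (∑' p, triangleTerm p + Real.pi ^ 4 / 90)) := by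
  have htriangle : ∀ q : ℕ × ℕ, zetaTwoSqTerm (q.1, q.1 + q.2 + 1) = triangleTerm q := fun q => by
    simp only [zetaTwoSqTerm, triangleTerm]; push_cast; ring_nf
  have htriangle' : ∀ q : ℕ × ℕ, zetaTwoSqTerm (q.1 + q.2 + 1, q.1) = triangleTerm q := fun q => by
    simp only [zetaTwoSqTerm, triangleTerm]; push_cast; ring_nf
  have hdiag : HasSum (fun n : ℕ => zetaTwoSqTerm (n, n)) (Real.pi ^ 4 / 90) := by
    convert hasSum_one_div_add_one_pow hasSum_zeta_four four_ne_zero using 2 with n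
    rw [zetaTwoSqTerm]
    ring
  refine HasSum.of_triangles_diag ?_ ?_ hdiag
  · simpa only [htriangle] using summable_triangleTerm.hasSum
  · simpa only [htriangle'] using summable_triangleTerm.hasSum

lemma hasSum_zetaTwoSqTerm_partial_fractions :
    HasSum zetaTwoSqTerm (∑' p, triangleTerm p + ∑' p, triangleTerm p
      + 2 * ∑' p, eulerTerm p + 2 * ∑' p, eulerTerm p) := by
  have hswap {f : ℕ × ℕ → ℝ} (hf : Summable f) : HasSum (fun p : ℕ × ℕ => f p.swap) (∑' p, f p) :=
    (Equiv.prodComm ℕ ℕ).hasSum_iff.mpr hf.hasSum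
  simp only [funext zetaTwoSqTerm_eq]
  exact ((summable_triangleTerm.hasSum.add (hswap summable_triangleTerm)).add
    (summable_eulerTerm.hasSum.mul_left 2)).add ((hswap summable_eulerTerm).mul_left 2)

lemma sum_antidiagonal_eulerTerm (s : ℕ) :
    ∑ kl ∈ antidiagonal s, eulerTerm kl = H (s + 1) / ((s : ℝ) + 2) ^ 3 := by
  rw [Nat.sum_antidiagonal_eq_sum_range_succ_mk, H_eq_sum_range, sum_div]
  refine sum_congr rfl fun k hk => ?_
  have hks : (k : ℝ) + ((s - k : ℕ) : ℝ) = s := by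
    rw [Nat.cast_sub (Nat.lt_succ_iff.mp (mem_range.mp hk))]; ring
  rw [eulerTerm, hks, div_div]

lemma hasSum_H_div_cube :
    HasSum (fun s : ℕ => H (s + 1) / ((s : ℝ) + 2) ^ 3) (∑' p, eulerTerm p) := by
  refine (HasAntidiagonal.sigmaAntidiagonalEquivProd.hasSum_iff.mpr
    summable_eulerTerm.hasSum).sigma fun s => ?_
  have hfin := hasSum_fintype (fun kl : antidiagonal s => eulerTerm kl)
  rwa [sum_coe_sort, sum_antidiagonal_eulerTerm] at hfin

theorem harmonic_sum_eq_zeta_four :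
    HasSum (fun n : ℕ => 4 * H (n + 1) / ((n : ℝ) + 2) ^ 3) (Real.pi ^ 4 / 90) := by
  have hζ4 : Real.pi ^ 4 / 90 = 4 * ∑' p, eulerTerm p := by
    linarith [hasSum_zetaTwoSqTerm_triangles_diag.unique hasSum_zetaTwoSqTerm_partial_fractions]
  rw [hζ4]
  simpa only [mul_div_assoc] using hasSum_H_div_cube.mul_left 4
end

section
/- For every integer n ≥ 1, |H_n − log n − γ − 1/(2n)| < 1/(10n²), where H_n is the n-th harmonic number and γ is the Euler–Mascheroni constant. -/
open Real Filter Topology Set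

lemma strictMonoOn_Ici_of_hasDerivAt_pos {f f' : ℝ → ℝ} {a : ℝ}
    (hf : ∀ x, a ≤ x → HasDerivAt f (f' x) x) (hf' : ∀ x, a < x → 0 < f' x) :
    StrictMonoOn f (Ici a) := by
  refine strictMonoOn_of_hasDerivWithinAt_pos (f' := f') (convex_Ici a)
    (fun x hx ↦ (hf x hx).continuousAt.continuousWithinAt) (fun x hx ↦ ?_) (fun x hx ↦ ?_) <;>
    rw [interior_Ici] at hx
  · exact (hf x hx.le).hasDerivWithinAt
  · exact hf' x hx

lemma StrictMono.lt_of_tendsto {α : Type*} [TopologicalSpace α] [Preorder α]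
    [OrderClosedTopology α] {f : ℕ → α} {a : α} (hf : StrictMono f)
    (ha : Tendsto f atTop (𝓝 a)) (n : ℕ) : f n < a :=
  (hf n.lt_succ_self).trans_le (hf.monotone.ge_of_tendsto ha _)

lemma StrictAnti.lt_of_tendsto {α : Type*} [TopologicalSpace α] [Preorder α]
    [OrderClosedTopology α] {f : ℕ → α} {a : α} (hf : StrictAnti f)
    (ha : Tendsto f atTop (𝓝 a)) (n : ℕ) : a < f n :=
  (hf.antitone.le_of_tendsto ha _).trans_lt (hf n.lt_succ_self)

lemma log_lt_half_sub_inv {u : ℝ} (hu : 1 < u) : log u < (u - u⁻¹) / 2 := by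
  have hmono : StrictMonoOn (fun x ↦ (x - x⁻¹) / 2 - log x) (Ici 1) := by
    refine strictMonoOn_Ici_of_hasDerivAt_pos (f' := fun x ↦ (x - 1) ^ 2 / (2 * x ^ 2))
      (fun x hx ↦ ?_) (fun x hx ↦ ?_)
    · have hx0 : x ≠ 0 := by positivity
      refine ((((hasDerivAt_id x).sub (hasDerivAt_inv hx0)).div_const 2).sub
        (hasDerivAt_log hx0)).congr_deriv ?_
      field_simp
      ring
    · have : x - 1 ≠ 0 := by linarith
      positivity
  simpa using hmono self_mem_Ici hu.le hu

lemma half_sub_inv_sub_lt_log {u : ℝ} (hu : 1 < u) :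
    (u - u⁻¹) / 2 - (u - 1) ^ 3 * (u + 1) / (12 * u ^ 2) < log u := by
  have hmono : StrictMonoOn
      (fun x ↦ log x - ((x - x⁻¹) / 2 - (x - 1) ^ 3 * (x + 1) / (12 * x ^ 2))) (Ici 1) := by
    refine strictMonoOn_Ici_of_hasDerivAt_pos (f' := fun x ↦ (x - 1) ^ 4 / (6 * x ^ 3))
      (fun x hx ↦ ?_) (fun x hx ↦ ?_)
    · have hx0 : x ≠ 0 := by positivity
      refine ((hasDerivAt_log hx0).sub
        ((((hasDerivAt_id x).sub (hasDerivAt_inv hx0)).div_const 2).sub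
          (((((hasDerivAt_id x).sub_const 1).pow 3).mul ((hasDerivAt_id x).add_const 1)).div
            ((hasDerivAt_pow 2 x).const_mul 12) (by positivity)))).congr_deriv ?_
      simp only [Pi.pow_apply, Pi.mul_apply, id]
      field_simp
      ring
    · have : x - 1 ≠ 0 := by linarith
      have : 0 < x := by linarith
      positivity
  simpa using hmono self_mem_Ici hu.le hu

lemma log_add_one_sub_log_lt {t : ℝ} (ht : 0 < t) :
    log (t + 1) - log t < 1 / (2 * t) + 1 / (2 * (t + 1)) := by
  have h := log_lt_half_sub_inv (u := (t + 1) / t) (by rw [one_lt_div ht]; linarith)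
  rw [log_div (by positivity) ht.ne'] at h
  convert h using 1
  field_simp
  ring

lemma sub_lt_log_add_one_sub_log {t : ℝ} (ht : 0 < t) :
    1 / (2 * t) + 1 / (2 * (t + 1)) - (1 / (12 * t ^ 2) - 1 / (12 * (t + 1) ^ 2)) <
      log (t + 1) - log t := by
  have h := half_sub_inv_sub_lt_log (u := (t + 1) / t) (by rw [one_lt_div ht]; linarith)
  rw [log_div (by positivity) ht.ne'] at h
  convert h using 1
  field_simp
  ring

lemma H_eq_harmonic (n : ℕ) : H n = harmonic n := by
  simp [H, harmonic_eq_sum_Icc]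

noncomputable def eulerLowerSeq (n : ℕ) : ℝ := harmonic n - log n - 1 / (2 * n)

noncomputable def eulerUpperSeq (n : ℕ) : ℝ := eulerLowerSeq n + 1 / (12 * n ^ 2)

lemma eulerLowerSeq_succ_sub (n : ℕ) :
    eulerLowerSeq (n + 1) - eulerLowerSeq n =
      1 / (2 * n) + 1 / (2 * (n + 1)) - (log (n + 1) - log n) := by
  have : (n : ℝ) + 1 ≠ 0 := by positivity
  simp only [eulerLowerSeq, harmonic_succ]
  push_cast
  field_simp
  ring

lemma strictMono_eulerLowerSeq_succ : StrictMono fun n ↦ eulerLowerSeq (n + 1) := by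
  refine strictMono_nat_of_lt_succ fun n ↦ sub_pos.1 ?_
  rw [eulerLowerSeq_succ_sub]
  push_cast
  linarith [log_add_one_sub_log_lt (t := n + 1) (by positivity)]

lemma strictAnti_eulerUpperSeq_succ : StrictAnti fun n ↦ eulerUpperSeq (n + 1) := by
  refine strictAnti_nat_of_succ_lt fun n ↦ ?_
  have h := eulerLowerSeq_succ_sub (n + 1)
  simp only [eulerUpperSeq]
  push_cast at h ⊢
  linarith [sub_lt_log_add_one_sub_log (t := n + 1) (by positivity)]

lemma tendsto_eulerLowerSeq : Tendsto eulerLowerSeq atTop (𝓝 eulerMascheroniConstant) := by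
  have h : Tendsto (fun n : ℕ ↦ 1 / (2 * (n : ℝ))) atTop (𝓝 0) :=
    tendsto_const_nhds.div_atTop (tendsto_natCast_atTop_atTop.const_mul_atTop two_pos)
  exact sub_zero eulerMascheroniConstant ▸ tendsto_harmonic_sub_log.sub h

lemma tendsto_eulerUpperSeq : Tendsto eulerUpperSeq atTop (𝓝 eulerMascheroniConstant) := by
  have h : Tendsto (fun n : ℕ ↦ 1 / (12 * (n : ℝ) ^ 2)) atTop (𝓝 0) :=
    tendsto_const_nhds.div_atTop (((tendsto_pow_atTop two_ne_zero).comp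
      tendsto_natCast_atTop_atTop).const_mul_atTop (by norm_num))
  exact add_zero eulerMascheroniConstant ▸ tendsto_eulerLowerSeq.add h

lemma eulerLowerSeq_lt_eulerMascheroniConstant {n : ℕ} (hn : n ≠ 0) :
    eulerLowerSeq n < eulerMascheroniConstant := by
  obtain ⟨k, rfl⟩ := Nat.exists_eq_succ_of_ne_zero hn
  exact strictMono_eulerLowerSeq_succ.lt_of_tendsto
    ((tendsto_add_atTop_iff_nat 1).2 tendsto_eulerLowerSeq) k

lemma eulerMascheroniConstant_lt_eulerUpperSeq {n : ℕ} (hn : n ≠ 0) :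
    eulerMascheroniConstant < eulerUpperSeq n := by
  obtain ⟨k, rfl⟩ := Nat.exists_eq_succ_of_ne_zero hn
  exact strictAnti_eulerUpperSeq_succ.lt_of_tendsto
    ((tendsto_add_atTop_iff_nat 1).2 tendsto_eulerUpperSeq) k

theorem harmonic_approx (n : ℕ) (hn : 1 ≤ n) :
    |H n - Real.log n - Real.eulerMascheroniConstant - 1 / (2 * (n : ℝ))| <
      1 / (10 * (n : ℝ) ^ 2) := by
  have hn0 : n ≠ 0 := by omega
  have hlower := eulerLowerSeq_lt_eulerMascheroniConstant hn0
  have hupper := eulerMascheroniConstant_lt_eulerUpperSeq hn0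
  have hgap : 1 / (12 * (n : ℝ) ^ 2) < 1 / (10 * (n : ℝ) ^ 2) := by gcongr; norm_num
  rw [eulerUpperSeq] at hupper
  rw [eulerLowerSeq] at hlower hupper
  rw [H_eq_harmonic, abs_lt]
  constructor <;> linarith [show (0 : ℝ) < 1 / (10 * (n : ℝ) ^ 2) by positivity]
end

section
/- For every positive integer N, |Σ_{d=1}^{N} μ(d)/d| ≤ 1, where μ is the Möbius function. -/
/-!
Counting multiples gives `∑_{d ≤ N} μ(d) ⌊N/d⌋ = ∑_{n ≤ N} ∑_{d ∣ n} μ(d) = 1`. Replacing `⌊N/d⌋`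
by `N/d` changes the `d`-th term by `μ(d) (N mod d)/d`, which vanishes for `d = 1` and has absolute
value less than `1` otherwise. Hence `|N ∑_{d ≤ N} μ(d)/d - 1| ≤ N - 1`.
-/

open ArithmeticFunction Finset

theorem sum_Icc_moebius_mul_div_eq_one {R : Type*} [Ring R] {N : ℕ} (hN : 0 < N) :
    ∑ d ∈ Icc 1 N, (moebius d : R) * (N / d : ℕ) = 1 := by
  have h := sum_Ioc_mul_zeta_eq_sum (moebius : ArithmeticFunction R) N
  rw [coe_moebius_mul_coe_zeta, ← Icc_add_one_left_eq_Ioc] at h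
  simpa [one_apply, show 1 ≤ N from hN] using h.symm

theorem natCast_mul_div_eq_mul_div_add_mul_mod_div {K : Type*} [Field K] [CharZero K] {d : ℕ}
    (hd : d ≠ 0) (N : ℕ) (x : K) :
    N * (x / d) = x * (N / d : ℕ) + x * ((N % d : ℕ) / d) := by
  have hdiv : (N : K) = d * (N / d : ℕ) + (N % d : ℕ) := by
    exact_mod_cast (Nat.div_add_mod N d).symm
  rw [hdiv]
  field_simp

section OrderedField

variable {K : Type*} [Field K] [LinearOrder K] [IsStrictOrderedRing K]

theorem abs_sum_mul_mod_div_le {a : ℕ → K} (ha : ∀ d, |a d| ≤ 1) {N : ℕ} (hN : 0 < N) :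
    |∑ d ∈ Icc 1 N, a d * ((N % d : ℕ) / d : K)| ≤ N - 1 := by
  have h1 : 1 ∈ Icc 1 N := mem_Icc.2 ⟨le_rfl, hN⟩
  calc _ ≤ ∑ d ∈ (Icc 1 N).erase 1, |a d * ((N % d : ℕ) / d : K)| := by
        rw [← add_sum_erase _ _ h1, Nat.mod_one, Nat.cast_zero, zero_div, mul_zero, zero_add]
        exact abs_sum_le_sum_abs _ _
    _ ≤ ∑ d ∈ (Icc 1 N).erase 1, (1 : K) := by
        refine sum_le_sum fun d hd => ?_
        have hd0 : 0 < d := by grind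
        rw [abs_mul, abs_of_nonneg (by positivity : (0 : K) ≤ (N % d : ℕ) / d), ← one_mul 1]
        gcongr
        · exact ha d
        · rw [div_le_one (by positivity)]
          exact_mod_cast (Nat.mod_lt N hd0).le
    _ = N - 1 := by simp [Nat.cast_sub hN]

theorem abs_sum_div_le_one_of_sum_mul_div_eq_one {a : ℕ → K} (ha : ∀ d, |a d| ≤ 1) {N : ℕ}
    (h : ∑ d ∈ Icc 1 N, a d * (N / d : ℕ) = 1) : |∑ d ∈ Icc 1 N, a d / d| ≤ 1 := by
  have hN : 0 < N := Nat.pos_of_ne_zero (by rintro rfl; simp at h)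
  have hN' : (0 : K) < N := by exact_mod_cast hN
  have hsplit :
      N * ∑ d ∈ Icc 1 N, a d / d = 1 + ∑ d ∈ Icc 1 N, a d * ((N % d : ℕ) / d : K) := by
    rw [← h, mul_sum, ← sum_add_distrib]
    exact sum_congr rfl fun d hd =>
      natCast_mul_div_eq_mul_div_add_mul_mod_div (by grind) N (a d)
  rw [← mul_le_mul_iff_right₀ hN', ← abs_of_pos hN', ← abs_mul, abs_of_pos hN', mul_one, hsplit]
  calc _ ≤ 1 + |∑ d ∈ Icc 1 N, a d * ((N % d : ℕ) / d : K)| := by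
        simpa using abs_add_le (1 : K) _
    _ ≤ N := by linarith [abs_sum_mul_mod_div_le ha hN]

end OrderedField

theorem abs_sum_moebius_div_le_one (N : ℕ) (hN : 0 < N) :
    |∑ d ∈ Finset.Icc 1 N, (moebius d : ℝ) / (d : ℝ)| ≤ 1 :=
  abs_sum_div_le_one_of_sum_mul_div_eq_one (fun _ => mod_cast abs_moebius_le_one)
    (sum_Icc_moebius_mul_div_eq_one hN)
end

section
/- For every integer Q ≥ 2, the sum Σ_{d=1}^{Q} μ(d)/d⁴ · 1/⌊Q/d⌋² differs from 6/(π²Q²) by at most (64 + 8 log Q)/Q³ in absolute value. -/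
/-!
Since `μ` is bounded, `∑ μ(d)/d²` converges to `1/ζ(2) = 6/π²` with tail after `Q` at most
`1/Q`. Putting `x = Q/d ≥ 1`, the `d`-th term of the sum equals `μ(d)/d⁴ · 1/⌊x⌋²`, while
`μ(d)/d² · 1/Q² = μ(d)/d⁴ · 1/x²`; since `⌊x⌋ ≤ x < ⌊x⌋ + 1 ≤ 2⌊x⌋` the two differ by at most
`8/(d⁴x³) = 8/(dQ³)`. Summing over `d ≤ Q` costs a harmonic number `≤ 1 + log Q`.
-/

open ArithmeticFunction Real Finset
open scoped ArithmeticFunction.Moebius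

lemma abs_moebius_cast_le_one (n : ℕ) : |(μ n : ℝ)| ≤ 1 := by
  exact_mod_cast abs_moebius_le_one

lemma abs_moebius_div_sq_le (n : ℕ) : |(μ n : ℝ) / (n : ℝ) ^ 2| ≤ 1 / (n : ℝ) ^ 2 := by
  rw [abs_div, abs_pow, Nat.abs_cast]
  gcongr
  exact abs_moebius_cast_le_one n

lemma summable_moebius_div_sq : Summable fun n : ℕ => (μ n : ℝ) / (n : ℝ) ^ 2 :=
  .of_norm_bounded (Real.summable_one_div_nat_pow.mpr one_lt_two) abs_moebius_div_sq_le

lemma tsum_moebius_div_sq : ∑' n : ℕ, (μ n : ℝ) / (n : ℝ) ^ 2 = 6 / π ^ 2 := by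
  have h2 : 1 < (2 : ℂ).re := by norm_num
  have hL : LSeries (fun n => (μ n : ℂ)) 2 = ((∑' n : ℕ, (μ n : ℝ) / (n : ℝ) ^ 2 : ℝ) : ℂ) := by
    rw [Complex.ofReal_tsum]
    refine tsum_congr fun n => ?_
    rcases eq_or_ne n 0 with rfl | hn
    · simp
    · rw [LSeries.term_of_ne_zero hn, show (2 : ℂ) = ((2 : ℕ) : ℂ) by norm_num,
        Complex.cpow_natCast]
      push_cast
      rfl
  have h := LSeries_zeta_mul_Lseries_moebius h2
  rw [LSeries_zeta_eq_riemannZeta h2, riemannZeta_two, hL] at h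
  have h' : π ^ 2 / 6 * ∑' n : ℕ, (μ n : ℝ) / (n : ℝ) ^ 2 = 1 := by exact_mod_cast h
  rw [eq_div_iff (pow_ne_zero 2 pi_ne_zero)]
  linear_combination 6 * h'

lemma sum_Icc_moebius_div_sq_add_tsum (N : ℕ) :
    ∑ d ∈ Icc 1 N, (μ d : ℝ) / (d : ℝ) ^ 2
      + ∑' k, (μ (k + (N + 1)) : ℝ) / ((k + (N + 1) : ℕ) : ℝ) ^ 2 = 6 / π ^ 2 := by
  rw [← tsum_moebius_div_sq, ← summable_moebius_div_sq.sum_add_tsum_nat_add (N + 1),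
    range_eq_Ico, sum_eq_sum_Ico_succ_bot N.succ_pos]
  simp [Ico_add_one_right_eq_Icc]

/-- Comparison with the telescoping series `∑ (1/(k+N) - 1/(k+N+1))`. -/
lemma abs_tsum_nat_add_le_of_abs_le_inv_sq {g : ℕ → ℝ} (hg : ∀ n, |g n| ≤ 1 / (n : ℝ) ^ 2)
    {N : ℕ} (hN : 0 < N) : |∑' k, g (k + (N + 1))| ≤ 1 / N := by
  have hterm (k : ℕ) : |g (k + (N + 1))| ≤ 1 / ((k : ℝ) + N) - 1 / ((k : ℝ) + N + 1) := by
    have hpos : (0 : ℝ) < k + N := by positivity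
    calc |g (k + (N + 1))| ≤ 1 / ((k : ℝ) + N + 1) ^ 2 := by
          simpa [add_assoc] using hg (k + (N + 1))
      _ ≤ 1 / (((k : ℝ) + N) * ((k : ℝ) + N + 1)) := by
          gcongr; nlinarith
      _ = 1 / ((k : ℝ) + N) - 1 / ((k : ℝ) + N + 1) := by
          field_simp; ring
  have hpartial (n : ℕ) : ∑ k ∈ range n, |g (k + (N + 1))| ≤ 1 / N := by
    calc ∑ k ∈ range n, |g (k + (N + 1))|
        ≤ ∑ k ∈ range n, (1 / ((k : ℝ) + N) - 1 / ((k : ℝ) + N + 1)) :=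
          sum_le_sum fun k _ => hterm k
      _ = 1 / N - 1 / ((n : ℝ) + N) := by
          simpa [add_assoc, add_comm, add_left_comm] using
            sum_range_sub' (fun k : ℕ => 1 / ((k : ℝ) + N)) n
      _ ≤ 1 / N := by
          have : (0 : ℝ) ≤ 1 / ((n : ℝ) + N) := by positivity
          linarith
  have hsum : Summable fun k => |g (k + (N + 1))| :=
    summable_of_sum_range_le (fun _ => abs_nonneg _) hpartial
  calc |∑' k, g (k + (N + 1))| ≤ ∑' k, |g (k + (N + 1))| := by
        simpa only [Real.norm_eq_abs] using norm_tsum_le_tsum_norm (f := fun k => g (k + (N + 1)))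
          (by simpa only [Real.norm_eq_abs] using hsum)
    _ ≤ 1 / N := Real.tsum_le_of_sum_range_le (fun _ => abs_nonneg _) hpartial

lemma abs_inv_floor_sq_sub_inv_sq_le {x : ℝ} (hx : 1 ≤ x) :
    |1 / (⌊x⌋₊ : ℝ) ^ 2 - 1 / x ^ 2| ≤ 8 / x ^ 3 := by
  set m : ℝ := (⌊x⌋₊ : ℝ)
  have hm_le : m ≤ x := Nat.floor_le (by linarith)
  have hlt : x < m + 1 := Nat.lt_floor_add_one x
  have hm1 : 1 ≤ m := Nat.one_le_cast.mpr (Nat.one_le_floor_iff x |>.mpr hx)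
  have hnn : 0 ≤ 1 / m ^ 2 - 1 / x ^ 2 := by
    rw [sub_nonneg]; gcongr
  rw [abs_of_nonneg hnn]
  calc 1 / m ^ 2 - 1 / x ^ 2 = (x - m) * (x + m) / (m ^ 2 * x ^ 2) := by
        field_simp; ring
    _ ≤ 1 * (2 * x) / (m ^ 2 * x ^ 2) := by
        gcongr <;> linarith
    _ = 8 / ((2 * m) ^ 2 * x) := by
        field_simp; ring
    _ ≤ 8 / (x ^ 2 * x) := by
        gcongr; linarith
    _ = 8 / x ^ 3 := by ring

lemma abs_moebius_floor_term_sub_le {Q d : ℕ} (hd : 0 < d) (hdQ : d ≤ Q) :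
    |(μ d : ℝ) / (d : ℝ) ^ 4 * (1 / ((Q / d : ℕ) : ℝ) ^ 2) - (μ d : ℝ) / (d : ℝ) ^ 2 / (Q : ℝ) ^ 2|
      ≤ 8 / ((d : ℝ) * (Q : ℝ) ^ 3) := by
  have hd0 : (0 : ℝ) < d := by exact_mod_cast hd
  have hx : 1 ≤ (Q : ℝ) / d := by rw [one_le_div hd0]; exact_mod_cast hdQ
  have hsplit : (μ d : ℝ) / (d : ℝ) ^ 4 * (1 / ((Q / d : ℕ) : ℝ) ^ 2)
        - (μ d : ℝ) / (d : ℝ) ^ 2 / (Q : ℝ) ^ 2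
      = (μ d : ℝ) / (d : ℝ) ^ 4 * (1 / (⌊(Q : ℝ) / d⌋₊ : ℝ) ^ 2 - 1 / ((Q : ℝ) / d) ^ 2) := by
    rw [Nat.floor_div_eq_div]
    field_simp
  calc _ = |(μ d : ℝ)| / (d : ℝ) ^ 4
        * |1 / (⌊(Q : ℝ) / d⌋₊ : ℝ) ^ 2 - 1 / ((Q : ℝ) / d) ^ 2| := by
        rw [hsplit, abs_mul, abs_div, abs_pow, abs_of_pos hd0]
    _ ≤ 1 / (d : ℝ) ^ 4 * (8 / ((Q : ℝ) / d) ^ 3) := by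
        gcongr
        · exact abs_moebius_cast_le_one d
        · exact abs_inv_floor_sq_sub_inv_sq_le hx
    _ = 8 / ((d : ℝ) * (Q : ℝ) ^ 3) := by
        field_simp

theorem moebius_floor_sum_estimate (Q : ℕ) (hQ : 2 ≤ Q) :
    |(∑ d ∈ Finset.Icc 1 Q, (moebius d : ℝ) / (d : ℝ) ^ 4 * (1 / ((Q / d : ℕ) : ℝ) ^ 2))
      - 6 / (Real.pi ^ 2 * (Q : ℝ) ^ 2)| ≤ (64 + 8 * Real.log Q) / (Q : ℝ) ^ 3 := by
  have htail : |∑' k, (μ (k + (Q + 1)) : ℝ) / ((k + (Q + 1) : ℕ) : ℝ) ^ 2| ≤ 1 / Q :=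
    abs_tsum_nat_add_le_of_abs_le_inv_sq abs_moebius_div_sq_le (by omega)
  have hharmonic : ∑ d ∈ Icc 1 Q, (d : ℝ)⁻¹ ≤ 1 + Real.log Q := by
    simpa [harmonic_eq_sum_Icc] using harmonic_le_one_add_log Q
  rw [div_mul_eq_div_div, ← sum_Icc_moebius_div_sq_add_tsum Q, add_div, sum_div, ← sub_sub,
    ← sum_sub_distrib]
  calc _ ≤ ∑ d ∈ Icc 1 Q, 8 / ((d : ℝ) * (Q : ℝ) ^ 3) + (1 / Q) / (Q : ℝ) ^ 2 := by
        refine (abs_sub _ _).trans (add_le_add ((abs_sum_le_sum_abs _ _).trans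
          (sum_le_sum fun d hd => ?_)) ?_)
        · exact abs_moebius_floor_term_sub_le (mem_Icc.mp hd).1 (mem_Icc.mp hd).2
        · rw [abs_div, abs_of_nonneg (by positivity : (0 : ℝ) ≤ Q ^ 2)]
          gcongr
    _ = (8 * ∑ d ∈ Icc 1 Q, (d : ℝ)⁻¹ + 1) / (Q : ℝ) ^ 3 := by
        rw [mul_sum, add_div, sum_div]
        congr 1
        · exact sum_congr rfl fun d _ => by field_simp
        · field_simp
    _ ≤ (64 + 8 * Real.log Q) / (Q : ℝ) ^ 3 := by
        gcongr ?_ / _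
        linarith
end
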